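/- Let Σ be an alphabet, Σ_1,…,Σ_n ⊆ Σ subalphabets with projections P_i, and K ⊆ L ⊆ Σ* languages. If the ALTOCT condition holds (i.e., decentralized observation functions f_i : Σ_i* → {Y,N,U} exist satisfying the ALTOCT requirements), then the OCT condition holds. -/
import Mathlib


/-- The three possible observer outputs: Yes, No, Unknown. -/
inductive Obs : Type
  | Y
  | N
  | U
deriving DecidableEq

/-- Projection onto subalphabet `Sub i`: keep only the letters lying in `Sub i`. -/
def P {α : Type*} {n : ℕ} (Sub : Fin n → Set α) [∀ i, DecidablePred (· ∈ Sub i)]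
    (i : Fin n) (ρ : List α) : List α :=
  ρ.filter (fun x => decide (x ∈ Sub i))

/-- Agent `i` can tell whether `ρ` is good or bad. -/
def cantell {α : Type*} {n : ℕ} (Sub : Fin n → Set α) [∀ i, DecidablePred (· ∈ Sub i)]
    (K L : Set (List α)) (i : Fin n) (ρ : List α) : Prop :=
  (ρ ∈ K → ¬ ∃ ρ' ∈ L \ K, P Sub i ρ = P Sub i ρ') ∧
  (ρ ∈ L \ K → ¬ ∃ ρ' ∈ K, P Sub i ρ = P Sub i ρ')

/-- The "at least one can tell" (OCT) condition. -/
def OCT {α : Type*} {n : ℕ} (Sub : Fin n → Set α) [∀ i, DecidablePred (· ∈ Sub i)]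
    (K L : Set (List α)) : Prop :=
  ∀ ρ ∈ L, ∃ i : Fin n, cantell Sub K L i ρ

/-- The given family of local decision functions satisfies the ALTOCT requirements. -/
def ALTOCTwith {α : Type*} {n : ℕ} (Sub : Fin n → Set α) [∀ i, DecidablePred (· ∈ Sub i)]
    (K L : Set (List α)) (f : Fin n → List α → Obs) : Prop :=
  (∀ ρ ∈ L, ∃ i : Fin n,
      (ρ ∈ K → f i (P Sub i ρ) = Obs.Y) ∧ (ρ ∈ L \ K → f i (P Sub i ρ) = Obs.N)) ∧
  (∀ ρ ∈ L, ∀ i : Fin n,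
      (f i (P Sub i ρ) = Obs.Y → ρ ∈ K) ∧ (f i (P Sub i ρ) = Obs.N → ρ ∈ L \ K))

/-- The alternative OCT (ALTOCT) condition: suitable local decision functions exist. -/
def ALTOCT {α : Type*} {n : ℕ} (Sub : Fin n → Set α) [∀ i, DecidablePred (· ∈ Sub i)]
    (K L : Set (List α)) : Prop :=
  ∃ f : Fin n → List α → Obs, ALTOCTwith Sub K L f

/-- ALTOCT implies OCT. -/
theorem ALTOCT_implies_OCT {α : Type*} {n : ℕ} (hn : 0 < n)
    (Sub : Fin n → Set α) [∀ i, DecidablePred (· ∈ Sub i)]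
    (K L : Set (List α)) (hKL : K ⊆ L)
    (h : ALTOCT Sub K L) : OCT Sub K L := by
  obtain ⟨f, h1, h2⟩ := h
  intro ρ hρ
  obtain ⟨i, hiY, hiN⟩ := h1 ρ hρ
  refine ⟨i, ?_, ?_⟩
  · rintro hK ⟨ρ', hρ', heq⟩
    have hY := hiY hK
    have := (h2 ρ' hρ'.1 i).1 (by rw [← heq, hY])
    exact hρ'.2 this
  · rintro hLK ⟨ρ', hρ', heq⟩
    have hN := hiN hLK
    have := (h2 ρ' (hKL hρ') i).2 (by rw [← heq, hN])
    exact this.2 (hρ')
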